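/- arXiv:2605.30946 — 2 statements merged into one kernel-verified Lean document; each statement's English description precedes it below -/
import Mathlib

section
/- Let N ≥ 3 be an integer, let f : [0,∞) → (0,∞) be continuous and nondecreasing with ∫₀^∞ ds/f(s) < ∞, let δ > 0, and let w ∈ C¹((0,δ)) be positive with w(r) → ∞ as r → 0⁺ and satisfy the integral identity −r^{N−1}·w'(r) = ∫₀^r f(w(s))·s^{N−1} ds for all 0 < r < δ. Then F(w(r)) ≥ r²/(2N) for all 0 < r < δ. -/
/-!
The integrand `f(w(s)) s^{N-1}` is positive, so `w' ≤ 0` and `w` decreases; as `f` is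
nondecreasing, `f(w(s)) ≥ f(w(r))` for `s ≤ r`, and the identity gives
`-r^{N-1} w'(r) ≥ f(w(r)) r^N / N`, i.e. `(F ∘ w)'(r) = -w'(r) / f(w(r)) ≥ r / N`.
Thus `F(w(r)) - r²/(2N)` is nondecreasing on `(0, δ)`; since `F ≥ 0`, its values near `0`
are at least `-r²/(2N) → 0`, so it is nonnegative.
-/

open MeasureTheory Set Filter Topology

/-- `F(u) = ∫_u^∞ ds / f(s)`. -/
noncomputable def Fint (f : ℝ → ℝ) (u : ℝ) : ℝ := ∫ s in Set.Ioi u, (f s)⁻¹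

section Fint

variable {f : ℝ → ℝ}

lemma Fint_nonneg {u : ℝ} (hf : ∀ s ∈ Ioi u, 0 ≤ f s) : 0 ≤ Fint f u :=
  setIntegral_nonneg measurableSet_Ioi fun s hs => inv_nonneg.2 (hf s hs)

lemma Fint_eq_sub_intervalIntegral {a b : ℝ} (hf : IntegrableOn (fun s => (f s)⁻¹) (Ioi a))
    (hab : a ≤ b) : Fint f b = Fint f a - ∫ s in a..b, (f s)⁻¹ := by
  rw [Fint, Fint, intervalIntegral.integral_of_le hab, ← Ioc_union_Ioi_eq_Ioi hab,
    setIntegral_union (Ioc_disjoint_Ioi le_rfl) measurableSet_Ioi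
      (hf.mono_set Ioc_subset_Ioi_self) (hf.mono_set (Ioi_subset_Ioi hab))]
  ring

lemma hasDerivAt_Fint {a x : ℝ} (hf : IntegrableOn (fun s => (f s)⁻¹) (Ioi a)) (hax : a < x)
    (hcont : ContinuousAt f x) (hfx : f x ≠ 0) : HasDerivAt (Fint f) (-(f x)⁻¹) x := by
  have hmeas : StronglyMeasurableAtFilter (fun s => (f s)⁻¹) (𝓝 x) :=
    ⟨Ioi a, Ioi_mem_nhds hax, hf.aestronglyMeasurable⟩
  have hint : IntervalIntegrable (fun s => (f s)⁻¹) volume a x :=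
    (intervalIntegrable_iff_integrableOn_Ioc_of_le hax.le).2 (hf.mono_set Ioc_subset_Ioi_self)
  refine ((intervalIntegral.integral_hasDerivAt_right hint hmeas (hcont.inv₀ hfx)).const_sub
    (Fint f a)).congr_of_eventuallyEq ?_
  filter_upwards [Ioi_mem_nhds hax] with u hu
  exact Fint_eq_sub_intervalIntegral hf hu.le

end Fint

lemma exists_deriv_ne_zero_of_tendsto_atTop {w w' : ℝ → ℝ} {ρ : ℝ} (hρ : 0 < ρ)
    (hw' : ∀ r ∈ Ioo 0 ρ, HasDerivAt w (w' r) r) (hwinf : Tendsto w (𝓝[>] 0) atTop) :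
    ∃ r ∈ Ioo 0 ρ, w' r ≠ 0 := by
  by_contra! hzero
  obtain ⟨c, hc⟩ := isOpen_Ioo.exists_is_const_of_deriv_eq_zero isPreconnected_Ioo
    (fun r hr => (hw' r hr).differentiableAt.differentiableWithinAt)
    (fun r hr => (hw' r hr).deriv.trans (hzero r hr))
  refine not_tendsto_const_atTop c (𝓝[>] 0) (hwinf.congr' ?_)
  filter_upwards [Ioo_mem_nhdsGT hρ] with r hr using hc r hr

section IntegralIdentity

variable {k : ℕ} {g w w' : ℝ → ℝ} {δ : ℝ}

lemma antitoneOn_of_neg_pow_mul_deriv_eq_integral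
    (hw' : ∀ r ∈ Ioo 0 δ, HasDerivAt w (w' r) r) (hg : ∀ s ∈ Ioo 0 δ, 0 ≤ g s)
    (hid : ∀ r ∈ Ioo 0 δ, -(r ^ k) * w' r = ∫ s in 0..r, g s) :
    AntitoneOn w (Ioo 0 δ) := by
  have hw'_nonpos : ∀ r ∈ Ioo 0 δ, w' r ≤ 0 := by
    intro r hr
    have hintegral : 0 ≤ ∫ s in 0..r, g s := by
      rw [intervalIntegral.integral_of_le hr.1.le]
      exact setIntegral_nonneg measurableSet_Ioc fun s hs => hg s ⟨hs.1, hs.2.trans_lt hr.2⟩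
    nlinarith [hid r hr, pow_pos hr.1 k]
  refine antitoneOn_of_deriv_nonpos (convex_Ioo 0 δ)
    (fun r hr => (hw' r hr).continuousAt.continuousWithinAt) ?_ ?_ <;> rw [interior_Ioo]
  · exact fun r hr => (hw' r hr).differentiableAt.differentiableWithinAt
  · exact fun r hr => (hw' r hr).deriv ▸ hw'_nonpos r hr

/-- Without integrability the identity would hold with the junk value `0` of the integral;
blow-up of `w` rules this out. -/
lemma integrableOn_Ioc_of_neg_pow_mul_deriv_eq_integral {ρ : ℝ}
    (hw' : ∀ r ∈ Ioo 0 δ, HasDerivAt w (w' r) r) (hwinf : Tendsto w (𝓝[>] 0) atTop)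
    (hg : ContinuousOn g (Ioo 0 δ))
    (hid : ∀ r ∈ Ioo 0 δ, -(r ^ k) * w' r = ∫ s in 0..r, g s) (hρ : ρ ∈ Ioo 0 δ) :
    IntegrableOn g (Ioc 0 ρ) := by
  by_contra hρint
  obtain ⟨r, hr, hw'r⟩ := exists_deriv_ne_zero_of_tendsto_atTop hρ.1
    (fun r hr => hw' r ⟨hr.1, hr.2.trans hρ.2⟩) hwinf
  have hrint : ¬ IntegrableOn g (Ioc 0 r) := fun h => hρint <| by
    rw [← Ioc_union_Ioc_eq_Ioc hr.1.le hr.2.le]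
    exact h.union (((hg.mono fun x hx => ⟨hr.1.trans_le hx.1, hx.2.trans_lt hρ.2⟩)
      ).integrableOn_Icc.mono_set Ioc_subset_Icc_self)
  have hid_r := hid r ⟨hr.1, hr.2.trans hρ.2⟩
  rw [intervalIntegral.integral_of_le hr.1.le, integral_undef hrint, neg_mul, neg_eq_zero] at hid_r
  exact hw'r ((mul_eq_zero.1 hid_r).resolve_left (pow_ne_zero _ hr.1.ne'))

end IntegralIdentity

lemma mul_pow_div_le_integral_mul_pow {h : ℝ → ℝ} {c ρ : ℝ} (k : ℕ) (hρ : 0 ≤ ρ)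
    (hint : IntervalIntegrable (fun s => h s * s ^ k) volume 0 ρ)
    (hc : ∀ s ∈ Ioo 0 ρ, c ≤ h s) :
    c * ρ ^ (k + 1) / (k + 1) ≤ ∫ s in 0..ρ, h s * s ^ k :=
  calc c * ρ ^ (k + 1) / (k + 1) = ∫ s in 0..ρ, c * s ^ k := by
        rw [intervalIntegral.integral_const_mul, integral_pow]
        rw [zero_pow k.succ_ne_zero, sub_zero]
        ring
    _ ≤ ∫ s in 0..ρ, h s * s ^ k :=
      intervalIntegral.integral_mono_on_of_le_Ioo hρ
        ((continuous_const.mul (continuous_pow k)).intervalIntegrable 0 ρ) hint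
        fun s hs => mul_le_mul_of_nonneg_right (hc s hs) (pow_nonneg hs.1.le k)

lemma div_succ_le_neg_inv_mul_deriv {k : ℕ} {h w w' : ℝ → ℝ} {r : ℝ} (hr : 0 < r)
    (hh : MonotoneOn h (Ici 0)) (hw_nonneg : ∀ s ∈ Ioc 0 r, 0 ≤ w s)
    (hanti : AntitoneOn w (Ioc 0 r)) (hhw : 0 < h (w r))
    (hint : IntegrableOn (fun s => h (w s) * s ^ k) (Ioc 0 r))
    (hid : -(r ^ k) * w' r = ∫ s in 0..r, h (w s) * s ^ k) :
    r / (k + 1) ≤ -(h (w r))⁻¹ * w' r := by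
  have hr_mem : r ∈ Ioc 0 r := ⟨hr, le_rfl⟩
  have hlow := mul_pow_div_le_integral_mul_pow k hr.le
    ((intervalIntegrable_iff_integrableOn_Ioc_of_le hr.le).2 hint) fun s hs =>
      hh (hw_nonneg r hr_mem) (hw_nonneg s (Ioo_subset_Ioc_self hs))
        (hanti (Ioo_subset_Ioc_self hs) hr_mem hs.2.le)
  rw [← hid, pow_succ] at hlow
  have hscaled : h (w r) * r / (k + 1) ≤ -w' r :=
    le_of_mul_le_mul_left (by linear_combination hlow) (pow_pos hr k)
  calc r / (k + 1) = (h (w r))⁻¹ * (h (w r) * r / (k + 1)) := by field_simp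
    _ ≤ (h (w r))⁻¹ * -w' r := by gcongr
    _ = -(h (w r))⁻¹ * w' r := by ring

lemma le_of_hasDerivAt_le_of_tendsto_zero {φ ψ φ' ψ' : ℝ → ℝ} {a b : ℝ}
    (hφ : ∀ t ∈ Ioo a b, HasDerivAt φ (φ' t) t) (hψ : ∀ t ∈ Ioo a b, HasDerivAt ψ (ψ' t) t)
    (hle : ∀ t ∈ Ioo a b, φ' t ≤ ψ' t) (hφa : Tendsto φ (𝓝[>] a) (𝓝 0))
    (hψ_nonneg : ∀ t ∈ Ioo a b, 0 ≤ ψ t) :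
    ∀ r ∈ Ioo a b, φ r ≤ ψ r := by
  have hd : ∀ t ∈ Ioo a b, HasDerivAt (fun t => ψ t - φ t) (ψ' t - φ' t) t :=
    fun t ht => (hψ t ht).sub (hφ t ht)
  have hmono : MonotoneOn (fun t => ψ t - φ t) (Ioo a b) := by
    refine monotoneOn_of_deriv_nonneg (convex_Ioo a b)
      (fun t ht => (hd t ht).continuousAt.continuousWithinAt) ?_ ?_ <;> rw [interior_Ioo]
    · exact fun t ht => (hd t ht).differentiableAt.differentiableWithinAt
    · exact fun t ht => (hd t ht).deriv ▸ sub_nonneg.2 (hle t ht)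
  intro r hr
  have h0 : -0 ≤ ψ r - φ r := by
    refine le_of_tendsto hφa.neg ?_
    filter_upwards [Ioc_mem_nhdsGT hr.1] with t ht
    have htab : t ∈ Ioo a b := ⟨ht.1, ht.2.trans_lt hr.2⟩
    linarith [hmono htab hr ht.2, hψ_nonneg t htab]
  linarith

theorem Fint_lower_bound_of_integral_identity_general
    (N : ℕ) (hN : 3 ≤ N) (f : ℝ → ℝ)
    (hfcont : ContinuousOn f (Set.Ici 0))
    (hfpos : ∀ u : ℝ, 0 ≤ u → 0 < f u)
    (hfmono : MonotoneOn f (Set.Ici 0))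
    (hInt : MeasureTheory.IntegrableOn (fun s => (f s)⁻¹) (Set.Ioi 0))
    (δ : ℝ)
    (w w' : ℝ → ℝ)
    (hw' : ∀ r ∈ Set.Ioo (0:ℝ) δ, HasDerivAt w (w' r) r)
    (hwpos : ∀ r ∈ Set.Ioo (0:ℝ) δ, 0 < w r)
    (hwinf : Filter.Tendsto w (nhdsWithin 0 (Set.Ioi 0)) Filter.atTop)
    (hid : ∀ r ∈ Set.Ioo (0:ℝ) δ,
      -(r ^ (N - 1)) * w' r = ∫ s in (0:ℝ)..r, f (w s) * s ^ (N - 1)) :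
    ∀ r ∈ Set.Ioo (0:ℝ) δ, r ^ 2 / (2 * (N : ℝ)) ≤ Fint f (w r) := by
  have hfw : ∀ r ∈ Ioo 0 δ, 0 < f (w r) := fun r hr => hfpos _ (hwpos r hr).le
  have hanti : AntitoneOn w (Ioo 0 δ) := antitoneOn_of_neg_pow_mul_deriv_eq_integral hw'
    (fun s hs => (mul_pos (hfw s hs) (pow_pos hs.1 _)).le) hid
  have hint : ∀ r ∈ Ioo 0 δ, IntegrableOn (fun s => f (w s) * s ^ (N - 1)) (Ioc 0 r) :=
    fun r hr => integrableOn_Ioc_of_neg_pow_mul_deriv_eq_integral hw' hwinf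
      ((hfcont.comp (fun s hs => (hw' s hs).continuousAt.continuousWithinAt)
        fun s hs => (hwpos s hs).le).mul (continuousOn_pow _)) hid hr
  have hderiv : ∀ r ∈ Ioo 0 δ, r / N ≤ -(f (w r))⁻¹ * w' r := fun r hr => by
    have hsub : Ioc 0 r ⊆ Ioo 0 δ := fun s hs => ⟨hs.1, hs.2.trans_lt hr.2⟩
    simpa only [Nat.cast_sub (by omega : 1 ≤ N), Nat.cast_one, sub_add_cancel] using
      div_succ_le_neg_inv_mul_deriv hr.1 hfmono (fun s hs => (hwpos s (hsub hs)).le)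
        (hanti.mono hsub) (hfw r hr) (hint r hr) (hid r hr)
  have hFw : ∀ t ∈ Ioo 0 δ, HasDerivAt (fun t => Fint f (w t)) (-(f (w t))⁻¹ * w' t) t :=
    fun t ht => (hasDerivAt_Fint hInt (hwpos t ht)
      (hfcont.continuousAt (Ici_mem_nhds (hwpos t ht))) (hfw t ht).ne').comp t (hw' t ht)
  have hsq : ∀ t : ℝ, HasDerivAt (fun t => t ^ 2 / (2 * (N : ℝ))) (t / N) t := fun t =>
    ((hasDerivAt_pow 2 t).div_const (2 * (N : ℝ))).congr_deriv (by field_simp; ring)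
  exact le_of_hasDerivAt_le_of_tendsto_zero (fun t _ => hsq t) hFw hderiv
    ((((continuous_pow 2).div_const _).tendsto' 0 0 (by simp)).mono_left nhdsWithin_le_nhds)
    fun t ht => Fint_nonneg fun s hs => (hfpos s ((hwpos t ht).trans hs).le).le

/-- If `w` is a positive `C¹` function on `(0,δ)` blowing up at the origin and
satisfying `-r^{N-1} w'(r) = ∫₀^r f(w(s)) s^{N-1} ds`, then
`F(w(r)) ≥ r² / (2N)` on `(0,δ)`. -/
theorem Fint_lower_bound_of_integral_identity
    (N : ℕ) (hN : 3 ≤ N) (f : ℝ → ℝ)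
    (hfcont : ContinuousOn f (Set.Ici 0))
    (hfpos : ∀ u : ℝ, 0 ≤ u → 0 < f u)
    (hfmono : MonotoneOn f (Set.Ici 0))
    (hInt : MeasureTheory.IntegrableOn (fun s => (f s)⁻¹) (Set.Ioi 0))
    (δ : ℝ) (hδ : 0 < δ)
    (w w' : ℝ → ℝ)
    (hw' : ∀ r ∈ Set.Ioo (0:ℝ) δ, HasDerivAt w (w' r) r)
    (hw'cont : ContinuousOn w' (Set.Ioo 0 δ))
    (hwpos : ∀ r ∈ Set.Ioo (0:ℝ) δ, 0 < w r)
    (hwinf : Filter.Tendsto w (nhdsWithin 0 (Set.Ioi 0)) Filter.atTop)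
    (hid : ∀ r ∈ Set.Ioo (0:ℝ) δ,
      -(r ^ (N - 1)) * w' r = ∫ s in (0:ℝ)..r, f (w s) * s ^ (N - 1)) :
    ∀ r ∈ Set.Ioo (0:ℝ) δ, r ^ 2 / (2 * (N : ℝ)) ≤ Fint f (w r) :=
  Fint_lower_bound_of_integral_identity_general N hN f hfcont hfpos hfmono hInt δ w w' hw' hwpos
    hwinf hid
end

section
/- Let g satisfy condition (g) and set f = e^g. Then F(u) − f'(u)/(f(u)·f''(u)) > 0 for all u ≥ 0. -/
/-!
For `f = e^g` one has `f' / (f f'') = φ := g' e^{-g} / (g'' + g'²)`, and differentiating,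
`φ' = -e^{-g} + e^{-g} (2 g''² - g' g''') / (g'' + g'²)²`, so the last part of condition (g) gives
`φ' > -e^{-g}`. Hence `s ↦ ∫_u^s e^{-g} + φ(s)` is strictly increasing on `[u, ∞)`. Convexity gives
`g(s) ≥ g(0) + g'(0) s`, which makes `e^{-g}` integrable and forces `φ(s) ≤ e^{-g(s)} / g'(0) → 0`;
so the value `φ(u)` of this function at `u` lies strictly below its limit `∫_u^∞ e^{-g} = F(u)`.
-/

/-- One-sided derivative on `[0, ∞)`. -/
noncomputable def dIci (g : ℝ → ℝ) : ℝ → ℝ := derivWithin g (Set.Ici 0)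

/-- Condition (g): `g ∈ C³([0,∞))` with `g' > 0`, `g'' > 0`, `g'² - g'' ≥ 0`
and `2 g''² - g' g''' > 0` on `[0, ∞)`. -/
def ConditionG (g : ℝ → ℝ) : Prop :=
  ContDiffOn ℝ 3 g (Set.Ici 0) ∧
  ∀ u : ℝ, 0 ≤ u →
    0 < dIci g u ∧
    0 < dIci (dIci g) u ∧
    0 ≤ (dIci g u) ^ 2 - dIci (dIci g) u ∧
    0 < 2 * (dIci (dIci g) u) ^ 2 - dIci g u * dIci (dIci (dIci g)) u

open Set MeasureTheory Filter Topology Real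

theorem StrictMonoOn.lt_of_tendsto_atTop {α β : Type*} [LinearOrder α] [NoMaxOrder α]
    [LinearOrder β] [TopologicalSpace β] [OrderClosedTopology β] {f : α → β} {a x : α} {L : β}
    (hf : StrictMonoOn f (Ici a)) (hlim : Tendsto f atTop (𝓝 L)) (hx : a ≤ x) : f x < L := by
  have : Nonempty α := ⟨x⟩
  obtain ⟨y, hxy⟩ := exists_gt x
  have hy : a ≤ y := hx.trans hxy.le
  have hyL : f y ≤ L := ge_of_tendsto hlim <| (eventually_ge_atTop y).mono fun v hv =>
    hf.monotoneOn hy (hy.trans hv) hv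
  exact (hf hx hy hxy).trans_le hyL

theorem ContDiffOn.hasDerivAt_derivWithin_Ici {F : ℝ → ℝ} {n : WithTop ℕ∞} {a s : ℝ}
    (hF : ContDiffOn ℝ n F (Ici a)) (hn : n ≠ 0) (hs : a < s) :
    HasDerivAt F (derivWithin F (Ici a) s) s := by
  have hmem : Ici a ∈ 𝓝 s := Ici_mem_nhds hs
  rw [derivWithin_of_mem_nhds hmem]
  exact ((hF.contDiffAt hmem).differentiableAt hn).hasDerivAt

section PrimitiveComparison

variable {φ φ' h : ℝ → ℝ} {u : ℝ}

theorem strictMonoOn_primitive_add (hh : ContinuousOn h (Ici u)) (hφ : ContinuousOn φ (Ici u))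
    (hφ' : ∀ s ∈ Ioi u, HasDerivAt φ (φ' s) s) (hlt : ∀ s ∈ Ioi u, -h s < φ' s) :
    StrictMonoOn (fun s => (∫ t in u..s, h t) + φ s) (Ici u) := by
  have hprim : ∀ s ∈ Ioi u, HasDerivAt (fun s => ∫ t in u..s, h t) (h s) s := fun s hs =>
    intervalIntegral.integral_hasDerivAt_right
      ((hh.mono Icc_subset_Ici_self).intervalIntegrable_of_Icc hs.le)
      ((hh.mono Ioi_subset_Ici_self).stronglyMeasurableAtFilter isOpen_Ioi s hs)
      (hh.continuousAt (Ici_mem_nhds hs))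
  have hcont : ContinuousOn (fun s => ∫ t in u..s, h t) (Ici u) := by
    refine continuousOn_of_locally_continuousOn fun s hs => ⟨Iio (s + 1), isOpen_Iio, by simp, ?_⟩
    have hIcc : ContinuousOn (fun s => ∫ t in u..s, h t) (Icc u (s + 1)) := by
      rw [← uIcc_of_le (by linarith [mem_Ici.1 hs])]
      refine intervalIntegral.continuousOn_primitive_interval ?_
      rw [uIcc_of_le (by linarith [mem_Ici.1 hs])]
      exact (hh.mono Icc_subset_Ici_self).integrableOn_Icc
    exact hIcc.mono fun t ⟨htu, hts⟩ => ⟨mem_Ici.1 htu, (mem_Iio.1 hts).le⟩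
  refine strictMonoOn_of_hasDerivWithinAt_pos (f' := fun s => h s + φ' s) (convex_Ici u)
    (hcont.add hφ) (fun s hs => ?_) (fun s hs => ?_)
  · rw [interior_Ici] at hs
    exact ((hprim s hs).add (hφ' s hs)).hasDerivWithinAt
  · rw [interior_Ici] at hs
    linarith [hlt s hs]

theorem lt_integral_Ioi_of_neg_lt_deriv (hh : ContinuousOn h (Ici u))
    (hint : IntegrableOn h (Ioi u)) (hφ : ContinuousOn φ (Ici u))
    (hφ' : ∀ s ∈ Ioi u, HasDerivAt φ (φ' s) s) (hlt : ∀ s ∈ Ioi u, -h s < φ' s)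
    (hlim : Tendsto φ atTop (𝓝 0)) : φ u < ∫ s in Ioi u, h s := by
  have hK : Tendsto (fun s => (∫ t in u..s, h t) + φ s) atTop (𝓝 ((∫ s in Ioi u, h s) + 0)) :=
    (intervalIntegral_tendsto_integral_Ioi u hint tendsto_id).add hlim
  simpa using (strictMonoOn_primitive_add hh hφ hφ' hlt).lt_of_tendsto_atTop hK le_rfl

end PrimitiveComparison

section ExpComp

variable {g : ℝ → ℝ} {x : ℝ}

theorem dIci_exp_comp (hg : DifferentiableOn ℝ g (Ici 0)) (hx : 0 ≤ x) :
    dIci (fun y => exp (g y)) x = exp (g x) * dIci g x :=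
  ((hg x hx).hasDerivWithinAt.exp).derivWithin (uniqueDiffOn_Ici 0 x hx)

theorem dIci_dIci_exp_comp (hg : DifferentiableOn ℝ g (Ici 0))
    (hg' : DifferentiableWithinAt ℝ (dIci g) (Ici 0) x) (hx : 0 ≤ x) :
    dIci (dIci fun y => exp (g y)) x = exp (g x) * (dIci (dIci g) x + dIci g x ^ 2) := by
  have hcongr : dIci (dIci fun y => exp (g y)) x = dIci (fun y => exp (g y) * dIci g y) x :=
    derivWithin_congr (fun y hy => dIci_exp_comp hg hy) (dIci_exp_comp hg hx)
  rw [hcongr]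
  refine (((hg x hx).hasDerivWithinAt.exp.mul hg'.hasDerivWithinAt).derivWithin
    (uniqueDiffOn_Ici 0 x hx)).trans ?_
  simp only [dIci]
  ring

end ExpComp

noncomputable def fpDivFFpp (g : ℝ → ℝ) (u : ℝ) : ℝ :=
  dIci g u * exp (-g u) / (dIci (dIci g) u + dIci g u ^ 2)

namespace ConditionG

variable {g : ℝ → ℝ} (hg : ConditionG g)
include hg

theorem contDiffOn_dIci : ContDiffOn ℝ 2 (dIci g) (Ici 0) :=
  hg.1.derivWithin (uniqueDiffOn_Ici 0) (by norm_num)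

theorem contDiffOn_dIci_dIci : ContDiffOn ℝ 1 (dIci (dIci g)) (Ici 0) :=
  hg.contDiffOn_dIci.derivWithin (uniqueDiffOn_Ici 0) (by norm_num)

theorem hasDerivAt {s : ℝ} (hs : 0 < s) : HasDerivAt g (dIci g s) s :=
  hg.1.hasDerivAt_derivWithin_Ici (by norm_num) hs

theorem hasDerivAt_dIci {s : ℝ} (hs : 0 < s) : HasDerivAt (dIci g) (dIci (dIci g) s) s :=
  hg.contDiffOn_dIci.hasDerivAt_derivWithin_Ici (by norm_num) hs

theorem hasDerivAt_dIci_dIci {s : ℝ} (hs : 0 < s) :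
    HasDerivAt (dIci (dIci g)) (dIci (dIci (dIci g)) s) s :=
  hg.contDiffOn_dIci_dIci.hasDerivAt_derivWithin_Ici (by norm_num) hs

theorem dIci_zero_le_dIci {s : ℝ} (hs : 0 ≤ s) : dIci g 0 ≤ dIci g s := by
  refine monotoneOn_of_hasDerivWithinAt_nonneg (f' := dIci (dIci g)) (convex_Ici 0)
    hg.contDiffOn_dIci.continuousOn (fun x hx => ?_) (fun x hx => ?_) self_mem_Ici hs hs <;>
    rw [interior_Ici] at hx
  · exact (hg.hasDerivAt_dIci hx).hasDerivWithinAt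
  · exact (hg.2 x hx.le).2.1.le

theorem add_mul_le {s : ℝ} (hs : 0 ≤ s) : g 0 + dIci g 0 * s ≤ g s := by
  have := (convex_Ici 0).mul_sub_le_image_sub_of_le_deriv (C := dIci g 0) hg.1.continuousOn
    (fun x hx => ?_) (fun x hx => ?_) 0 self_mem_Ici s hs hs
  · linarith
  all_goals rw [interior_Ici] at hx
  · exact (hg.hasDerivAt hx).differentiableAt.differentiableWithinAt
  · rw [(hg.hasDerivAt hx).deriv]
    exact hg.dIci_zero_le_dIci hx.le

theorem integrableOn_exp_neg : IntegrableOn (fun s => exp (-g s)) (Ioi 0) := by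
  have hc : 0 < dIci g 0 := (hg.2 0 le_rfl).1
  refine ((exp_neg_integrableOn_Ioi 0 hc).const_mul (exp (-g 0))).mono' ?_ ?_
  · exact ((continuous_exp.comp continuous_neg).comp_continuousOn
      (hg.1.continuousOn.mono Ioi_subset_Ici_self)).aestronglyMeasurable measurableSet_Ioi
  · refine (ae_restrict_iff' measurableSet_Ioi).2 (Eventually.of_forall fun s hs => ?_)
    rw [norm_of_nonneg (exp_pos _).le, ← exp_add]
    exact exp_le_exp.2 (by linarith [hg.add_mul_le (le_of_lt hs)])

theorem tendsto_atTop : Tendsto g atTop atTop := by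
  have hc : 0 < dIci g 0 := (hg.2 0 le_rfl).1
  refine tendsto_atTop_mono' _ ?_
    (tendsto_atTop_add_const_left _ (g 0) (tendsto_id.const_mul_atTop hc))
  filter_upwards [eventually_ge_atTop 0] with s hs using hg.add_mul_le hs

theorem dIci_dIci_add_sq_pos {u : ℝ} (hu : 0 ≤ u) : 0 < dIci (dIci g) u + dIci g u ^ 2 := by
  have := (hg.2 u hu).2.1
  positivity

theorem dIci_div_eq_fpDivFFpp {u : ℝ} (hu : 0 ≤ u) :
    dIci (fun y => exp (g y)) u / (exp (g u) * dIci (dIci fun y => exp (g y)) u) =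
      fpDivFFpp g u := by
  have hdiff : DifferentiableOn ℝ g (Ici 0) := hg.1.differentiableOn (by norm_num)
  rw [dIci_exp_comp hdiff hu,
    dIci_dIci_exp_comp hdiff (hg.contDiffOn_dIci.differentiableOn (by norm_num) u hu) hu,
    fpDivFFpp, exp_neg]
  have := hg.dIci_dIci_add_sq_pos hu
  field_simp

theorem continuousOn_fpDivFFpp : ContinuousOn (fpDivFFpp g) (Ici 0) :=
  (hg.contDiffOn_dIci.continuousOn.mul
      (continuous_exp.comp_continuousOn hg.1.continuousOn.neg)).div
    (hg.contDiffOn_dIci_dIci.continuousOn.add (hg.contDiffOn_dIci.continuousOn.pow 2))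
    fun _ hu => (hg.dIci_dIci_add_sq_pos hu).ne'

theorem fpDivFFpp_nonneg {u : ℝ} (hu : 0 ≤ u) : 0 ≤ fpDivFFpp g u := by
  have := (hg.2 u hu).1
  have := hg.dIci_dIci_add_sq_pos hu
  unfold fpDivFFpp
  positivity

theorem fpDivFFpp_le {u : ℝ} (hu : 0 ≤ u) : fpDivFFpp g u ≤ exp (-g u) / dIci g 0 := by
  have h1 := (hg.2 u hu).1
  have h2 := (hg.2 u hu).2.1
  calc fpDivFFpp g u ≤ dIci g u * exp (-g u) / dIci g u ^ 2 := by
        unfold fpDivFFpp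
        gcongr
        linarith
    _ = exp (-g u) / dIci g u := by field_simp
    _ ≤ exp (-g u) / dIci g 0 := by
        gcongr
        exacts [(hg.2 0 le_rfl).1, hg.dIci_zero_le_dIci hu]

theorem tendsto_fpDivFFpp : Tendsto (fpDivFFpp g) atTop (𝓝 0) := by
  have hexp : Tendsto (fun u => exp (-g u) / dIci g 0) atTop (𝓝 0) := by
    simpa using (tendsto_exp_neg_atTop_nhds_zero.comp hg.tendsto_atTop).div_const (dIci g 0)
  refine tendsto_of_tendsto_of_tendsto_of_le_of_le' tendsto_const_nhds hexp ?_ ?_ <;>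
    filter_upwards [eventually_ge_atTop 0] with u hu
  exacts [hg.fpDivFFpp_nonneg hu, hg.fpDivFFpp_le hu]

theorem hasDerivAt_fpDivFFpp {s : ℝ} (hs : 0 < s) :
    HasDerivAt (fpDivFFpp g)
      (-exp (-g s) + exp (-g s) *
        (2 * dIci (dIci g) s ^ 2 - dIci g s * dIci (dIci (dIci g)) s) /
          (dIci (dIci g) s + dIci g s ^ 2) ^ 2) s := by
  have hQ := (hg.dIci_dIci_add_sq_pos hs.le).ne'
  have hg0 := hg.hasDerivAt hs
  have hg1 := hg.hasDerivAt_dIci hs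
  have hg2 := hg.hasDerivAt_dIci_dIci hs
  have hnum : HasDerivAt (fun x => dIci g x * exp (-g x))
      (dIci (dIci g) s * exp (-g s) + dIci g s * (exp (-g s) * -dIci g s)) s :=
    hg1.mul hg0.neg.exp
  have hden : HasDerivAt (fun x => dIci (dIci g) x + dIci g x ^ 2)
      (dIci (dIci (dIci g)) s + 2 * dIci g s * dIci (dIci g) s) s := by
    simpa using hg2.fun_add (hg1.fun_pow 2)
  refine (hnum.div hden hQ).congr_deriv ?_
  field_simp
  ring

theorem fpDivFFpp_lt_Fint {u : ℝ} (hu : 0 ≤ u) :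
    fpDivFFpp g u < Fint (fun y => exp (g y)) u := by
  have hcont : ContinuousOn (fun s => exp (-g s)) (Ici u) :=
    continuous_exp.comp_continuousOn (hg.1.continuousOn.mono (Ici_subset_Ici.2 hu)).neg
  have hFint : Fint (fun y => exp (g y)) u = ∫ s in Ioi u, exp (-g s) := by
    simp only [Fint, exp_neg]
  rw [hFint]
  refine lt_integral_Ioi_of_neg_lt_deriv hcont
    (hg.integrableOn_exp_neg.mono_set (Ioi_subset_Ioi hu))
    (hg.continuousOn_fpDivFFpp.mono (Ici_subset_Ici.2 hu))
    (fun s hs => hg.hasDerivAt_fpDivFFpp (hu.trans_lt hs)) (fun s hs => ?_) hg.tendsto_fpDivFFpp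
  have hs0 : 0 ≤ s := hu.trans (le_of_lt hs)
  have := (hg.2 s hs0).2.2.2
  have := hg.dIci_dIci_add_sq_pos hs0
  exact lt_add_of_pos_right _ (by positivity)

end ConditionG

/-- If `g` satisfies condition (g) and `f = e^g`, then
`F(u) - f'(u)/(f(u) f''(u)) > 0` for all `u ≥ 0`. -/
theorem Fint_sub_fp_div_ffpp_pos
    (g : ℝ → ℝ) (hg : ConditionG g)
    (f : ℝ → ℝ) (hf : ∀ u : ℝ, f u = Real.exp (g u)) :
    ∀ u : ℝ, 0 ≤ u →
      0 < Fint f u - dIci f u / (f u * dIci (dIci f) u) := by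
  obtain rfl : f = fun y => exp (g y) := funext hf
  intro u hu
  rw [hg.dIci_div_eq_fpDivFFpp hu]
  exact sub_pos.2 (hg.fpDivFFpp_lt_Fint hu)
end
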